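/- arXiv:1812.10170 — 6 statements merged into one kernel-verified Lean document; each statement's English description precedes it below -/
import Mathlib

section
/- If a > b > r ≥ |z| for complex z and real a, b, r, and λ ∈ [0,1], then |z/(b-z) - λ·z/(a-z)| ≤ r/(b-r) - λ·r/(a-r). -/
/-! Write `g c z = z / (c - z)`. The left-hand side is `(1 - λ) g b z + λ (g b z - g a z)`, and
`g b z - g a z = (a - b) z / ((b - z) (a - z))`. Since `‖c - z‖ ≥ c - r`, each of `g b` and
`g b - g a` is bounded in norm on the disc `‖z‖ ≤ r` by its value at `r`; the convex combination
of these bounds is the right-hand side. -/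

namespace Complex

variable {z : ℂ} {a b r : ℝ}

lemma sub_le_norm_ofReal_sub (hb : 0 ≤ b) (hz : ‖z‖ ≤ r) : b - r ≤ ‖(b : ℂ) - z‖ := by
  have := norm_sub_norm_le (b : ℂ) z
  rw [norm_real, Real.norm_of_nonneg hb] at this
  linarith

lemma ofReal_sub_ne_zero_of_norm_lt (hz : ‖z‖ ≤ r) (hrb : r < b) : (b : ℂ) - z ≠ 0 := by
  intro h
  have := sub_le_norm_ofReal_sub ((norm_nonneg z).trans hz |>.trans hrb.le) hz
  rw [h, norm_zero] at this
  linarith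

lemma norm_div_ofReal_sub_le (hz : ‖z‖ ≤ r) (hrb : r < b) :
    ‖z / ((b : ℂ) - z)‖ ≤ r / (b - r) := by
  have hr : 0 ≤ r := (norm_nonneg z).trans hz
  rw [norm_div]
  gcongr
  exact sub_le_norm_ofReal_sub (hr.trans hrb.le) hz

lemma norm_div_ofReal_sub_sub_div_ofReal_sub_le (hz : ‖z‖ ≤ r) (hrb : r < b) (hba : b ≤ a) :
    ‖z / ((b : ℂ) - z) - z / ((a : ℂ) - z)‖ ≤ r / (b - r) - r / (a - r) := by
  have hr : 0 ≤ r := (norm_nonneg z).trans hz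
  have hra : r < a := hrb.trans_le hba
  have hbz := ofReal_sub_ne_zero_of_norm_lt hz hrb
  have haz := ofReal_sub_ne_zero_of_norm_lt hz hra
  have hdiff : z / ((b : ℂ) - z) - z / ((a : ℂ) - z)
      = z * ((a - b : ℝ) : ℂ) / (((b : ℂ) - z) * ((a : ℂ) - z)) := by
    field_simp
    push_cast
    ring
  have hrhs : r / (b - r) - r / (a - r) = r * (a - b) / ((b - r) * (a - r)) := by
    field_simp [(sub_pos.2 hrb).ne', (sub_pos.2 hra).ne']
    ring
  rw [hdiff, hrhs, norm_div, norm_mul, norm_mul, norm_real, Real.norm_of_nonneg (sub_nonneg.2 hba)]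
  gcongr
  · exact sub_le_norm_ofReal_sub (hr.trans hrb.le) hz
  · exact sub_le_norm_ofReal_sub (hr.trans hra.le) hz

end Complex

open Complex in
theorem stmt_0_general (z : ℂ) (a b r lam : ℝ) (hab : b < a) (hbr : r < b)
    (hz : ‖z‖ ≤ r) (hlam : lam ∈ Set.Icc (0:ℝ) 1) :
    ‖z / ((b:ℂ) - z) - (lam:ℂ) * (z / ((a:ℂ) - z))‖ ≤
      r / (b - r) - lam * (r / (a - r)) := by
  obtain ⟨hlam0, hlam1⟩ := hlam
  have hsplit : z / ((b:ℂ) - z) - (lam:ℂ) * (z / ((a:ℂ) - z))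
      = ((1 - lam : ℝ) : ℂ) * (z / ((b:ℂ) - z))
        + (lam : ℂ) * (z / ((b:ℂ) - z) - z / ((a:ℂ) - z)) := by
    push_cast
    ring
  calc ‖z / ((b:ℂ) - z) - (lam:ℂ) * (z / ((a:ℂ) - z))‖
      ≤ (1 - lam) * ‖z / ((b:ℂ) - z)‖ + lam * ‖z / ((b:ℂ) - z) - z / ((a:ℂ) - z)‖ := by
        rw [hsplit]
        refine (norm_add_le _ _).trans_eq ?_
        rw [norm_mul, norm_mul, norm_real, norm_real, Real.norm_of_nonneg (sub_nonneg.2 hlam1),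
          Real.norm_of_nonneg hlam0]
    _ ≤ (1 - lam) * (r / (b - r)) + lam * (r / (b - r) - r / (a - r)) := by
        gcongr
        · exact norm_div_ofReal_sub_le hz hbr
        · exact norm_div_ofReal_sub_sub_div_ofReal_sub_le hz hbr hab.le
    _ = r / (b - r) - lam * (r / (a - r)) := by ring

theorem stmt_0 (z : ℂ) (a b r lam : ℝ) (hr : 0 < r) (hab : b < a) (hbr : r < b)
    (hz : ‖z‖ ≤ r) (hlam : lam ∈ Set.Icc (0:ℝ) 1) :
    ‖z / ((b:ℂ) - z) - (lam:ℂ) * (z / ((a:ℂ) - z))‖ ≤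
      r / (b - r) - lam * (r / (a - r)) :=
  stmt_0_general z a b r lam hab hbr hz hlam
end

section
/- The growth order of the entire function z ↦ ∑_{n≥0} (-1)ⁿ cⁿ z^{2n} / (n! · Γ(qn + a)), where q is a positive integer, c > 0 and a > 0, equals 1/(1+q). In particular the growth order is strictly between 0 and 1. -/
/-!
Since `-log |cₙ| = log n! + log Γ(qn + a) - n log c`, everything reduces to
`log Γ(x) ~ x log x`. For factorials this is `m log m - m ≤ log m! ≤ m log m`; for real
`x ≥ 2`, monotonicity of `Γ` on `[2, ∞)` traps `Γ(x)` between `⌊x - 1⌋!` and `⌊x⌋!`.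
Hence `-log |cₙ| ~ (1 + q) n log n`, so the ratio in the limsup actually converges to
`1 / (1 + q)`.
-/

open Filter Real Topology Asymptotics

namespace Asymptotics

variable {α : Type*} {l : Filter α}

theorem IsEquivalent.of_le_of_le {f g u v : α → ℝ} (hf : f ~[l] v) (hg : g ~[l] v)
    (hfu : f ≤ᶠ[l] u) (hug : u ≤ᶠ[l] g) : u ~[l] v := by
  refine IsLittleO.isEquivalent (isLittleO_iff.2 fun ε hε => ?_)
  filter_upwards [hf.isLittleO.bound hε, hg.isLittleO.bound hε, hfu, hug]
    with x hfx hgx hfux hugx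
  simp only [Pi.sub_apply, Real.norm_eq_abs] at *
  exact (abs_le_max_abs_abs (sub_le_sub_right hfux _) (sub_le_sub_right hugx _)).trans
    (max_le hfx hgx)

theorem IsEquivalent.mul_log {u v : α → ℝ} (huv : u ~[l] v) (hv : Tendsto v l atTop) :
    (fun x => u x * Real.log (u x)) ~[l] fun x => v x * Real.log (v x) :=
  huv.mul (huv.log hv)

theorem IsEquivalent.tendsto_div_of_const_mul {u v : α → ℝ} {k : ℝ}
    (huv : u ~[l] fun x => k * v x) (hv : ∀ᶠ x in l, v x ≠ 0) :
    Tendsto (fun x => v x / u x) l (𝓝 k⁻¹) := by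
  refine (IsEquivalent.refl.div huv).symm.tendsto_nhds (tendsto_const_nhds.congr' ?_)
  filter_upwards [hv] with x hx
  change k⁻¹ = v x / (k * v x)
  rw [mul_comm, div_mul_cancel_left₀ hx]

end Asymptotics

theorem isEquivalent_log_const_mul {k : ℝ} (hk : 0 < k) :
    (fun x => log (k * x)) ~[atTop] log := by
  have h := (IsEquivalent.refl (u := log) (l := atTop)).const_add_of_norm_tendsto_atTop
    (c := log k) (tendsto_norm_atTop_atTop.comp tendsto_log_atTop)
  refine h.congr_left ?_
  filter_upwards [eventually_gt_atTop 0] with x hx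
  rw [log_mul hk.ne' hx.ne']

theorem isLittleO_natCast_mul_log :
    (fun n : ℕ => (n : ℝ)) =o[atTop] fun n => n * log n := by
  simpa using (isBigO_refl (fun n : ℕ => (n : ℝ)) atTop).mul_isLittleO
    ((isLittleO_one_left_iff ℝ).2
      (tendsto_norm_atTop_atTop.comp (tendsto_log_atTop.comp tendsto_natCast_atTop_atTop)))

theorem isEquivalent_log_factorial :
    (fun n : ℕ => log n.factorial) ~[atTop] fun n => n * log n := by
  refine IsLittleO.isEquivalent (IsBigO.trans_isLittleO ?_ isLittleO_natCast_mul_log)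
  refine IsBigO.of_bound 1 (eventually_ne_atTop 0 |>.mono fun n hn => ?_)
  have hupper : log n.factorial ≤ n * log n := by
    rw [← log_pow]
    exact log_le_log (by positivity) (by exact_mod_cast n.factorial_le_pow)
  have hlower := Stirling.le_log_factorial_stirling hn
  have hlog_n : 0 ≤ log (n : ℝ) := log_natCast_nonneg n
  have hlog_2pi : 0 < log (2 * π) := log_pos (by linarith [pi_gt_three])
  rw [Pi.sub_apply, Real.norm_eq_abs, Real.norm_eq_abs, abs_of_nonpos (by linarith),
    abs_of_nonneg n.cast_nonneg]
  linarith

theorem log_Gamma_le_log_Gamma {x y : ℝ} (hx : 2 ≤ x) (hxy : x ≤ y) :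
    log (Gamma x) ≤ log (Gamma y) :=
  log_le_log (Gamma_pos_of_pos (by linarith))
    (Gamma_strictMonoOn_Ici.monotoneOn hx (le_trans hx hxy) hxy)

theorem isEquivalent_log_Gamma :
    (fun x => log (Gamma x)) ~[atTop] fun x => x * log x := by
  have hfloor : (fun x : ℝ => log (⌊x⌋₊).factorial) ~[atTop] fun x => x * log x :=
    (isEquivalent_log_factorial.comp_tendsto tendsto_nat_floor_atTop).trans
      (isEquivalent_nat_floor.mul_log tendsto_id)
  have hshift : Tendsto (fun x : ℝ => x - 1) atTop atTop :=
    tendsto_atTop_add_const_right _ _ tendsto_id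
  have hsub_one : (fun x : ℝ => x - 1) ~[atTop] fun x => x :=
    IsEquivalent.refl.add_const_of_norm_tendsto_atTop
      (tendsto_norm_atTop_atTop.comp tendsto_id)
  have hlower : (fun x : ℝ => log (⌊x - 1⌋₊).factorial) ~[atTop] fun x => x * log x :=
    (hfloor.comp_tendsto hshift).trans (hsub_one.mul_log tendsto_id)
  refine hlower.of_le_of_le hfloor ?_ ?_
  · filter_upwards [eventually_ge_atTop 2] with x hx
    have hm : (1 : ℝ) ≤ ⌊x - 1⌋₊ := by exact_mod_cast Nat.le_floor (by push_cast; linarith)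
    rw [← Gamma_nat_eq_factorial]
    exact log_Gamma_le_log_Gamma (by linarith)
      (by linarith [Nat.floor_le (by linarith : 0 ≤ x - 1)])
  · filter_upwards [eventually_ge_atTop 2] with x hx
    rw [← Gamma_nat_eq_factorial]
    exact log_Gamma_le_log_Gamma hx (Nat.lt_floor_add_one x).le

theorem isEquivalent_log_Gamma_mul_add {k : ℝ} (hk : 0 < k) (b : ℝ) :
    (fun n : ℕ => log (Gamma (k * n + b))) ~[atTop] fun n => k * n * log n := by
  have hkn : Tendsto (fun n : ℕ => k * n) atTop atTop :=
    tendsto_natCast_atTop_atTop.const_mul_atTop hk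
  have hb : (fun n : ℕ => k * n + b) ~[atTop] fun n => k * n :=
    IsEquivalent.refl.add_const_of_norm_tendsto_atTop (tendsto_norm_atTop_atTop.comp hkn)
  calc (fun n : ℕ => log (Gamma (k * n + b)))
      _ ~[atTop] fun n => (k * n + b) * log (k * n + b) :=
        isEquivalent_log_Gamma.comp_tendsto (tendsto_atTop_add_const_right _ b hkn)
      _ ~[atTop] fun n => k * n * log (k * n) := hb.mul_log hkn
      _ ~[atTop] fun n => k * n * log n :=
        IsEquivalent.refl.mul
          ((isEquivalent_log_const_mul hk).comp_tendsto tendsto_natCast_atTop_atTop)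

theorem stmt_3 (q : ℕ) (hq : 1 ≤ q) (c a : ℝ) (hc : 0 < c) (ha : 0 < a) :
    Filter.limsup
      (fun n : ℕ =>
        ((n : ℝ) * Real.log n) /
          (-Real.log (c ^ n / ((n.factorial : ℝ) * Real.Gamma ((q : ℝ) * n + a)))))
      Filter.atTop = 1 / (1 + (q : ℝ)) ∧
    0 < 1 / (1 + (q : ℝ)) ∧ 1 / (1 + (q : ℝ)) < 1 := by
  have hq0 : (0 : ℝ) < q := by exact_mod_cast hq
  have hnlogn : ∀ n : ℕ, 0 ≤ (n : ℝ) * log n := fun n =>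
    mul_nonneg n.cast_nonneg (log_natCast_nonneg n)
  have hsum : (fun n : ℕ => log n.factorial + log (Gamma (q * n + a))) ~[atTop]
      fun n => (1 + q) * (n * log n) :=
    (isEquivalent_log_factorial.add_add_of_nonneg hnlogn
      (fun n => by rw [Pi.zero_apply, mul_assoc]; exact mul_nonneg hq0.le (hnlogn n))
      (isEquivalent_log_Gamma_mul_add hq0 a)).congr_right
      (Eventually.of_forall fun n => by simp only [Pi.add_apply]; ring)
  have hlin : (fun n : ℕ => n * log c) =o[atTop] fun n => (1 + q) * (n * log n) := by
    rw [isLittleO_const_mul_right_iff (by positivity)]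
    simpa only [mul_comm] using isLittleO_natCast_mul_log.const_mul_left (log c)
  have hcoef : (fun n : ℕ => -log (c ^ n / (n.factorial * Gamma (q * n + a)))) ~[atTop]
      fun n => (1 + q) * (n * log n) := by
    refine (hsum.sub_isLittleO hlin).congr_left (Eventually.of_forall fun n => ?_)
    have hΓ : 0 < Gamma (q * n + a) := Gamma_pos_of_pos (by positivity)
    simp only [Pi.sub_apply]
    rw [log_div (by positivity) (by positivity), log_mul (by positivity) hΓ.ne', log_pow]
    ring
  have hlim := hcoef.tendsto_div_of_const_mul <| (eventually_ge_atTop 2).mono fun n hn =>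
    (mul_pos (by positivity) (log_pos (by exact_mod_cast hn))).ne'
  refine ⟨by simpa only [one_div] using hlim.limsup_eq, by positivity, ?_⟩
  rw [div_lt_one (by positivity)]
  linarith
end

section
/- Let q be a positive integer and a > 0, c > 0. Then limsup_{n→∞} (n log n)/(n log|c|⁻¹ + log Γ(n+1) + log Γ(qn+a)) = 1/(1+q). -/
/-!
Stirling's bounds `n log n - n ≤ log n! ≤ n log n` give `log n! ∼ n log n`, and since `Γ` is
monotone on `[2, ∞)`, squeezing `Γ x` between `⌊x - 1⌋₊!` and `⌊x⌋₊!` gives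
`log Γ(x) ∼ x log x`. If `u / v → r > 0` then `u log u ∼ r · v log v`, so `log Γ(n + 1) ∼ n log n`
and `log Γ(q n + a) ∼ q · n log n`, while `n log |c|⁻¹ = o(n log n)`. The denominator is therefore
`∼ (1 + q) n log n`, and the sequence converges to `1 / (1 + q)`.
-/

open Filter Real Topology
open scoped Nat

theorem tendsto_log_factorial_div_mul_log :
    Tendsto (fun n : ℕ => log n ! / (n * log n)) atTop (𝓝 1) := by
  have hlog : Tendsto (fun n : ℕ => log n) atTop atTop :=
    tendsto_log_atTop.comp tendsto_natCast_atTop_atTop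
  have hlower : Tendsto (fun n : ℕ => 1 - (log n)⁻¹) atTop (𝓝 1) := by
    simpa using tendsto_const_nhds.sub (tendsto_inv_atTop_zero.comp hlog)
  refine tendsto_of_tendsto_of_tendsto_of_le_of_le' hlower tendsto_const_nhds ?_ ?_
  · filter_upwards [eventually_ge_atTop 2] with n hn
    have hlogn : 0 < log n := log_pos (by exact_mod_cast hn)
    have hstirling := Stirling.le_log_factorial_stirling (n := n) (by omega)
    have h2π : 0 ≤ log (2 * π) := log_nonneg (by nlinarith [pi_gt_three])
    rw [le_div_iff₀ (by positivity)]
    field_simp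
    nlinarith
  · filter_upwards [eventually_ge_atTop 2] with n hn
    have hlogn : 0 < log n := log_pos (by exact_mod_cast hn)
    have : log n ! ≤ n * log n := by
      rw [← log_pow]
      exact log_le_log (by positivity) (by exact_mod_cast Nat.factorial_le_pow n)
    rwa [div_le_one (by positivity)]

theorem Gamma_le_factorial_floor {x : ℝ} (hx : 2 ≤ x) : Gamma x ≤ ⌊x⌋₊ ! := by
  rw [← Gamma_nat_eq_factorial]
  refine Gamma_strictMonoOn_Ici.monotoneOn hx ?_ (Nat.lt_floor_add_one x).le
  simp only [Set.mem_Ici]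
  linarith [Nat.lt_floor_add_one x]

theorem factorial_floor_sub_one_le_Gamma {x : ℝ} (hx : 2 ≤ x) : (⌊x - 1⌋₊ ! : ℝ) ≤ Gamma x := by
  rw [← Gamma_nat_eq_factorial]
  have : 1 ≤ ⌊x - 1⌋₊ := Nat.le_floor (by push_cast; linarith)
  refine Gamma_strictMonoOn_Ici.monotoneOn ?_ hx
    (by linarith [Nat.floor_le (by linarith : 0 ≤ x - 1)])
  simp only [Set.mem_Ici]
  exact_mod_cast Nat.succ_le_succ this

section

variable {α : Type*} {l : Filter α} {u v : α → ℝ} {r : ℝ}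

theorem tendsto_mul_log_div_mul_log (hv : Tendsto v l atTop)
    (huv : Tendsto (fun i => u i / v i) l (𝓝 r)) (hr : 0 < r) :
    Tendsto (fun i => u i * log (u i) / (v i * log (v i))) l (𝓝 r) := by
  have hlog_ratio : Tendsto (fun i => 1 + log (u i / v i) / log (v i)) l (𝓝 1) := by
    simpa using tendsto_const_nhds.add
      (((continuousAt_log hr.ne').tendsto.comp huv).div_atTop (tendsto_log_atTop.comp hv))
  refine (by simpa using huv.mul hlog_ratio : Tendsto _ l (𝓝 r)).congr' ?_
  filter_upwards [hv.eventually_gt_atTop 1, huv.eventually (lt_mem_nhds hr)]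
    with i hv1 huv0
  have hv0 : 0 < v i := by linarith
  have hu0 : 0 < u i := (div_pos_iff_of_pos_right hv0).1 huv0
  have : 0 < log (v i) := log_pos hv1
  simp only [log_div hu0.ne' hv0.ne']
  field_simp
  ring

theorem tendsto_log_factorial_comp_div_mul_log {k : α → ℕ} (hv : Tendsto v l atTop)
    (hkv : Tendsto (fun i => (k i : ℝ) / v i) l (𝓝 r)) (hr : 0 < r) :
    Tendsto (fun i => log (k i)! / (v i * log (v i))) l (𝓝 r) := by
  have hk : Tendsto k l atTop := tendsto_natCast_atTop_iff.1 (hv.num hr hkv)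
  have := (tendsto_log_factorial_div_mul_log.comp hk).mul (tendsto_mul_log_div_mul_log hv hkv hr)
  rw [one_mul] at this
  refine this.congr' ?_
  filter_upwards [hk.eventually_ge_atTop 2] with i hk2
  have : 0 < log (k i) := log_pos (by exact_mod_cast hk2)
  have : (0 : ℝ) < k i := by positivity
  rw [Function.comp_apply]
  field_simp

theorem tendsto_log_Gamma_div_mul_log :
    Tendsto (fun x : ℝ => log (Gamma x) / (x * log x)) atTop (𝓝 1) := by
  have hfloor : Tendsto (fun x : ℝ => (⌊x⌋₊ : ℝ) / x) atTop (𝓝 1) := tendsto_nat_floor_div_atTop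
  have hfloor_sub_one : Tendsto (fun x : ℝ => (⌊x - 1⌋₊ : ℝ) / x) atTop (𝓝 1) := by
    have := hfloor.sub (tendsto_inv_atTop_zero (𝕜 := ℝ))
    rw [sub_zero] at this
    refine this.congr' ?_
    filter_upwards [eventually_ge_atTop 1] with x hx
    rw [Nat.floor_sub_one, Nat.cast_pred (Nat.floor_pos.2 hx)]
    field_simp
  refine tendsto_of_tendsto_of_tendsto_of_le_of_le'
    (tendsto_log_factorial_comp_div_mul_log tendsto_id hfloor_sub_one one_pos)
    (tendsto_log_factorial_comp_div_mul_log tendsto_id hfloor one_pos) ?_ ?_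
    <;> filter_upwards [eventually_ge_atTop 2] with x hx
    <;> have : 0 < x * log x := mul_pos (by linarith) (log_pos (by linarith))
    <;> refine div_le_div_of_nonneg_right (log_le_log ?_ ?_) this.le
  · positivity
  · exact factorial_floor_sub_one_le_Gamma hx
  · exact Gamma_pos_of_pos (by linarith)
  · exact Gamma_le_factorial_floor hx

theorem tendsto_log_Gamma_comp_div_mul_log (hv : Tendsto v l atTop)
    (huv : Tendsto (fun i => u i / v i) l (𝓝 r)) (hr : 0 < r) :
    Tendsto (fun i => log (Gamma (u i)) / (v i * log (v i))) l (𝓝 r) := by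
  have hu : Tendsto u l atTop := hv.num hr huv
  have := (tendsto_log_Gamma_div_mul_log.comp hu).mul (tendsto_mul_log_div_mul_log hv huv hr)
  rw [one_mul] at this
  refine this.congr' ?_
  filter_upwards [hu.eventually_gt_atTop 1] with i hu1
  have : 0 < log (u i) := log_pos hu1
  have : 0 < u i := by linarith
  rw [Function.comp_apply]
  field_simp

end

theorem tendsto_mul_natCast_add_div (r b : ℝ) :
    Tendsto (fun n : ℕ => (r * n + b) / n) atTop (𝓝 r) := by
  simpa [add_comm] using tendsto_add_mul_div_add_mul_atTop_nhds b 0 r one_ne_zero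

theorem stmt_4_general (q : ℕ) (hq : 1 ≤ q) (a c : ℝ) :
    Filter.limsup
      (fun n : ℕ =>
        ((n : ℝ) * Real.log n) /
          ((n : ℝ) * Real.log (|c|⁻¹) + Real.log (Real.Gamma ((n : ℝ) + 1)) +
            Real.log (Real.Gamma ((q : ℝ) * n + a))))
      Filter.atTop = 1 / (1 + (q : ℝ)) := by
  have hn : Tendsto (fun n : ℕ => (n : ℝ)) atTop atTop := tendsto_natCast_atTop_atTop
  have hq0 : (0 : ℝ) < q := by exact_mod_cast hq
  have hconst : Tendsto (fun n : ℕ => log |c|⁻¹ / log n) atTop (𝓝 0) :=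
    tendsto_const_nhds.div_atTop (tendsto_log_atTop.comp hn)
  have hsucc := tendsto_log_Gamma_comp_div_mul_log hn
    (by simpa using tendsto_mul_natCast_add_div 1 1) one_pos
  have hlin := tendsto_log_Gamma_comp_div_mul_log hn (tendsto_mul_natCast_add_div q a) hq0
  have hden := ((hconst.add hsucc).add hlin).inv₀ (by positivity)
  rw [zero_add] at hden
  rw [one_div]
  refine (hden.congr' ?_).limsup_eq
  filter_upwards [eventually_ge_atTop 2] with n hn2
  have : 0 < log n := log_pos (by exact_mod_cast hn2)
  have : (0 : ℝ) < n := by positivity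
  field_simp

theorem stmt_4 (q : ℕ) (hq : 1 ≤ q) (a c : ℝ) (ha : 0 < a) (hc : 0 < c) :
    Filter.limsup
      (fun n : ℕ =>
        ((n : ℝ) * Real.log n) /
          ((n : ℝ) * Real.log (|c|⁻¹) + Real.log (Real.Gamma ((n : ℝ) + 1)) +
            Real.log (Real.Gamma ((q : ℝ) * n + a))))
      Filter.atTop = 1 / (1 + (q : ℝ)) :=
  stmt_4_general q hq a c
end

section
/- Let q ∈ ℕ with q ≥ 1, let δ, b, c > 0 and p + 1 > 0, and set a = p/δ + (b+2)/2. Define φ(z) = ∑_{n≥0} (-1)ⁿ cⁿ (2n+1) zⁿ / (n! Γ(qn + a)) · Γ(a). If φ has only positive real zeros (αₙ) with ∑1/αₙ < ∞ and φ(z) = ∏_{n≥1}(1 - z/αₙ), then the first two Euler–Rayleigh sums are ℓ₁ = 3cΓ(a)/Γ(q+a) and ℓ₂ = 9c²Γ(a)²/Γ(q+a)² - 5c²Γ(a)/Γ(2q+a). -/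
open Filter Finset Topology


-- Bonferroni-type inequalities for finite products
lemma bonf (y : ℕ → ℝ) (hy0 : ∀ i, 0 ≤ y i) (hy1 : ∀ i, y i ≤ 1) (N : ℕ) :
    0 ≤ ((∑ i ∈ range N, y i)^2 - (∑ i ∈ range N, y i^2))/2 ∧
    0 ≤ ((∑ i ∈ range N, y i)^3 - 3*(∑ i ∈ range N, y i)*(∑ i ∈ range N, y i^2)
        + 2*(∑ i ∈ range N, y i^3))/6 ∧
    1 - (∑ i ∈ range N, y i) ≤ ∏ i ∈ range N, (1 - y i) ∧
    (∏ i ∈ range N, (1 - y i)) ≤ 1 - (∑ i ∈ range N, y i)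
        + ((∑ i ∈ range N, y i)^2 - (∑ i ∈ range N, y i^2))/2 ∧
    1 - (∑ i ∈ range N, y i) + ((∑ i ∈ range N, y i)^2 - (∑ i ∈ range N, y i^2))/2
        - ((∑ i ∈ range N, y i)^3 - 3*(∑ i ∈ range N, y i)*(∑ i ∈ range N, y i^2)
        + 2*(∑ i ∈ range N, y i^3))/6 ≤ ∏ i ∈ range N, (1 - y i) := by
  induction N with
  | zero => norm_num
  | succ N ih =>
    obtain ⟨h2, h3, hlb1, hub, hlb2⟩ := ih
    have hP0 : (0:ℝ) ≤ ∏ i ∈ range N, (1 - y i) :=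
      Finset.prod_nonneg fun i _ => by linarith [hy1 i]
    have hyN0 := hy0 N; have hyN1 := hy1 N
    have h1y : (0:ℝ) ≤ 1 - y N := by linarith
    have hs10 : (0:ℝ) ≤ ∑ i ∈ range N, y i := Finset.sum_nonneg fun i _ => hy0 i
    rw [Finset.prod_range_succ, Finset.sum_range_succ, Finset.sum_range_succ,
      Finset.sum_range_succ]
    set P := ∏ i ∈ range N, (1 - y i)
    set s1 := ∑ i ∈ range N, y i
    set s2 := ∑ i ∈ range N, y i^2
    set s3 := ∑ i ∈ range N, y i^3
    have e2 : (0:ℝ) ≤ (s1^2 - s2)/2 := h2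
    have e3 : (0:ℝ) ≤ (s1^3 - 3*s1*s2 + 2*s3)/6 := h3
    have m1 : (1 - s1) * (1 - y N) ≤ P * (1 - y N) :=
      mul_le_mul_of_nonneg_right hlb1 h1y
    have m2 : P * (1 - y N) ≤ (1 - s1 + (s1^2 - s2)/2) * (1 - y N) :=
      mul_le_mul_of_nonneg_right hub h1y
    have m3 : (1 - s1 + (s1^2 - s2)/2 - (s1^3 - 3*s1*s2 + 2*s3)/6) * (1 - y N)
        ≤ P * (1 - y N) := mul_le_mul_of_nonneg_right hlb2 h1y
    refine ⟨by nlinarith, by nlinarith, by nlinarith, by nlinarith, by nlinarith⟩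

lemma le_zero_of_small (X c1 c2 tmax : ℝ) (htmax : 0 < tmax)
    (h : ∀ t : ℝ, 0 < t → t ≤ tmax → X ≤ t * c1 + t^2 * c2) : X ≤ 0 := by
  have key : Tendsto (fun t : ℝ => t * c1 + t^2 * c2) (𝓝[>] (0:ℝ)) (𝓝 0) := by
    have hc : Continuous fun t : ℝ => t * c1 + t^2 * c2 := by continuity
    have h0 : (0:ℝ) * c1 + (0:ℝ)^2 * c2 = 0 := by ring
    simpa [h0] using (hc.tendsto 0).mono_left nhdsWithin_le_nhds
  refine ge_of_tendsto key ?_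
  filter_upwards [Ioc_mem_nhdsGT_of_mem ⟨le_refl (0:ℝ), htmax⟩] with t ht
  exact h t ht.1 ht.2

lemma log_one_sub_bound {u : ℝ} (h0 : 0 ≤ u) (h1 : u ≤ 1/2) :
    ‖Real.log (1 - u)‖ ≤ 2 * u := by
  have h1u : (0:ℝ) < 1 - u := by linarith
  have hnp : Real.log (1 - u) ≤ 0 := Real.log_nonpos (by linarith) (by linarith)
  rw [Real.norm_eq_abs, abs_of_nonpos hnp]
  have hinv : -Real.log (1 - u) = Real.log (1 - u)⁻¹ := (Real.log_inv _).symm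
  rw [hinv]
  have hle : Real.log (1-u)⁻¹ ≤ (1-u)⁻¹ - 1 :=
    Real.log_le_sub_one_of_pos (inv_pos.2 h1u)
  have hI : (1 - u) * (1-u)⁻¹ = 1 := mul_inv_cancel₀ (ne_of_gt h1u)
  nlinarith [hI, mul_nonneg h0 (by linarith : (0:ℝ) ≤ 1 - 2*u)]

lemma prod_bounds (x : ℕ → ℝ) (hx : ∀ n, 0 < x n) (hx1 : ∀ n, x n ≤ 1/2)
    (hs1 : Summable x) (hs2 : Summable fun n => x n ^ 2)
    (hs3 : Summable fun n => x n ^ 3) :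
    1 - (∑' n, x n) ≤ (∏' n, (1 - x n)) ∧
    (∏' n, (1 - x n)) ≤ 1 - (∑' n, x n) + ((∑' n, x n)^2 - (∑' n, x n ^ 2))/2 ∧
    1 - (∑' n, x n) + ((∑' n, x n)^2 - (∑' n, x n ^ 2))/2
      - ((∑' n, x n)^3 - 3*(∑' n, x n)*(∑' n, x n ^ 2) + 2*(∑' n, x n ^ 3))/6
      ≤ (∏' n, (1 - x n)) := by
  have hlog : Summable fun n => Real.log (1 - x n) :=
    Summable.of_norm_bounded (hs1.mul_left 2)
      (fun n => log_one_sub_bound (hx n).le (hx1 n))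
  have hHP : HasProd (fun n => 1 - x n) (∏' n, (1 - x n)) :=
    (Real.multipliable_of_summable_log
      (fun n => by show (0:ℝ) < 1 - x n; linarith [hx1 n]) hlog).hasProd
  have hPlim : Tendsto (fun N => ∏ i ∈ range N, (1 - x i)) atTop
      (𝓝 (∏' n, (1 - x n))) := hHP.tendsto_prod_nat
  have h1 : Tendsto (fun N => ∑ i ∈ range N, x i) atTop (𝓝 (∑' n, x n)) :=
    hs1.hasSum.tendsto_sum_nat
  have h2 : Tendsto (fun N => ∑ i ∈ range N, x i ^ 2) atTop (𝓝 (∑' n, x n ^ 2)) :=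
    hs2.hasSum.tendsto_sum_nat
  have h3 : Tendsto (fun N => ∑ i ∈ range N, x i ^ 3) atTop (𝓝 (∑' n, x n ^ 3)) :=
    hs3.hasSum.tendsto_sum_nat
  have hb := fun N => bonf x (fun i => (hx i).le) (fun i => by linarith [hx1 i]) N
  refine ⟨?_, ?_, ?_⟩
  · exact le_of_tendsto_of_tendsto' (tendsto_const_nhds.sub h1) hPlim
      (fun N => (hb N).2.2.1)
  · exact le_of_tendsto_of_tendsto' hPlim
      ((tendsto_const_nhds.sub h1).add (((h1.pow 2).sub h2).div_const 2))
      (fun N => (hb N).2.2.2.1)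
  · exact le_of_tendsto_of_tendsto'
      (((tendsto_const_nhds.sub h1).add (((h1.pow 2).sub h2).div_const 2)).sub
        ((((h1.pow 3).sub ((tendsto_const_nhds.mul h1).mul h2)).add
          (tendsto_const_nhds.mul h3)).div_const 6))
      hPlim (fun N => (hb N).2.2.2.2)

lemma two_n_one (n : ℕ) : 2*(n:ℝ)+1 ≤ 3*2^n := by
  induction n with
  | zero => norm_num
  | succ n ih =>
    have h : (1:ℝ) ≤ 2^n := one_le_pow₀ one_le_two
    push_cast
    push_cast at ih
    rw [pow_succ]
    nlinarith

lemma gamma_inv_bound (q : ℕ) (hq : 1 ≤ q) (a : ℝ) :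
    ∃ C : ℝ, 1 ≤ C ∧ ∀ n : ℕ, |1 / Real.Gamma ((q:ℝ)*n + a)| ≤ C := by
  set N₀ := ⌈2 - a⌉₊ with hN₀
  refine ⟨1 + ∑ k ∈ Finset.range N₀, |1 / Real.Gamma ((q:ℝ)*k + a)|,
    le_add_of_nonneg_right (Finset.sum_nonneg fun i _ => abs_nonneg _), fun n => ?_⟩
  by_cases hn : n < N₀
  · have h := Finset.single_le_sum (f := fun k : ℕ => |1 / Real.Gamma ((q:ℝ)*k + a)|)
      (s := Finset.range N₀) (fun i _ => abs_nonneg _) (Finset.mem_range.2 hn)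
    linarith
  · push_neg at hn
    have h2 : (2:ℝ) ≤ (q:ℝ)*n + a := by
      have ha1 : (2 - a : ℝ) ≤ N₀ := Nat.le_ceil _
      have ha2 : (N₀:ℝ) ≤ n := Nat.cast_le.2 hn
      have ha3 : (n:ℝ) ≤ (q:ℝ)*n := by
        have h1q : (1:ℝ) ≤ q := by exact_mod_cast hq
        nlinarith [Nat.cast_nonneg (α := ℝ) n]
      linarith
    have hone : (1:ℝ) ≤ Real.Gamma ((q:ℝ)*n + a) := by
      have := Real.Gamma_strictMonoOn_Ici.monotoneOn (Set.mem_Ici.2 (le_refl (2:ℝ)))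
        (Set.mem_Ici.2 h2) h2
      rwa [Real.Gamma_two] at this
    have : |1 / Real.Gamma ((q:ℝ)*n + a)| = 1 / Real.Gamma ((q:ℝ)*n + a) :=
      abs_of_nonneg (by positivity)
    rw [this]
    have h1 : 1 / Real.Gamma ((q:ℝ)*n + a) ≤ 1 := by
      rw [div_le_one (by linarith)]; exact hone
    have : (0:ℝ) ≤ ∑ k ∈ Finset.range N₀, |1 / Real.Gamma ((q:ℝ)*k + a)| :=
      Finset.sum_nonneg fun i _ => abs_nonneg _
    linarith
set_option maxHeartbeats 1000000 in
lemma series_est (q : ℕ) (hq : 1 ≤ q) (c : ℝ) (hc : 0 < c) (a : ℝ)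
    (hΓa : Real.Gamma a ≠ 0) :
    ∃ M : ℝ, 0 ≤ M ∧ ∀ z : ℝ, 0 ≤ z → z ≤ 1 →
      |Real.Gamma a * (∑' n : ℕ, (-1)^n * c^n * (2*(n:ℝ)+1) * z^n /
          ((n.factorial:ℝ) * Real.Gamma ((q:ℝ)*n + a)))
        - (1 - 3*c*Real.Gamma a/Real.Gamma ((q:ℝ)+a) * z
           + 5*c^2*Real.Gamma a/Real.Gamma (2*(q:ℝ)+a)/2 * z^2)| ≤ M * z^3 := by
  obtain ⟨C, hC1, hC⟩ := gamma_inv_bound q hq a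
  have hC0 : (0:ℝ) < C := lt_of_lt_of_le one_pos hC1
  set u : ℕ → ℝ → ℝ := fun n z => (-1)^n * c^n * (2*(n:ℝ)+1) * z^n /
      ((n.factorial:ℝ) * Real.Gamma ((q:ℝ)*n + a)) with hu
  have habs : ∀ (z : ℝ) (n : ℕ), |u n z| ≤ 3*C*((2*c*|z|)^n / (n.factorial:ℝ)) := by
    intro z n
    have hA : |(-1:ℝ)^n * c^n * (2*(n:ℝ)+1) * z^n| = c^n * (2*(n:ℝ)+1) * |z|^n := by
      rw [abs_mul, abs_mul, abs_mul, abs_pow, abs_pow, abs_pow, abs_neg, abs_one,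
        one_pow, one_mul, abs_of_pos hc, abs_of_pos (by positivity : (0:ℝ) < 2*(n:ℝ)+1)]
    have hB : |((n.factorial:ℝ) * Real.Gamma ((q:ℝ)*n + a))|
        = (n.factorial:ℝ) * |Real.Gamma ((q:ℝ)*n + a)| := by
      rw [abs_mul, Nat.abs_cast]
    have hgam : 1/|Real.Gamma ((q:ℝ)*n + a)| ≤ C := by
      have := hC n; rwa [abs_div, abs_one] at this
    have hnum : c^n * (2*(n:ℝ)+1) * |z|^n ≤ 3*(2*c*|z|)^n := by
      rw [mul_pow, mul_pow]
      nlinarith [mul_le_mul_of_nonneg_right (two_n_one n)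
        (mul_nonneg (pow_nonneg hc.le n) (pow_nonneg (abs_nonneg z) n)),
        pow_nonneg hc.le n, pow_nonneg (abs_nonneg z) n]
    calc |u n z| = (c^n * (2*(n:ℝ)+1) * |z|^n) /
          ((n.factorial:ℝ) * |Real.Gamma ((q:ℝ)*n + a)|) := by
            rw [hu]; rw [abs_div, hA, hB]
      _ = (c^n * (2*(n:ℝ)+1) * |z|^n / (n.factorial:ℝ)) *
          (1/|Real.Gamma ((q:ℝ)*n + a)|) := by
            rw [← div_div, div_eq_mul_one_div]
      _ ≤ (3*(2*c*|z|)^n / (n.factorial:ℝ)) * C := by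
            apply mul_le_mul _ hgam (by positivity) (by positivity)
            gcongr
      _ = 3*C*((2*c*|z|)^n / (n.factorial:ℝ)) := by ring
  have hsum : ∀ z : ℝ, Summable (fun n => u n z) := fun z =>
    Summable.of_norm_bounded ((Real.summable_pow_div_factorial (2*c*|z|)).mul_left (3*C))
      (habs z)
  have habs_sum : ∀ z : ℝ, Summable (fun n => |u n z|) := fun z =>
    Summable.of_nonneg_of_le (fun n => abs_nonneg _) (habs z)
      ((Real.summable_pow_div_factorial (2*c*|z|)).mul_left (3*C))
  refine ⟨|Real.Gamma a| * (3*C*∑' n:ℕ, (2*c)^n/(n.factorial:ℝ)),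
    mul_nonneg (abs_nonneg _) (mul_nonneg (by positivity)
      (tsum_nonneg fun n => by positivity)), fun z hz0 hz1 => ?_⟩
  have hzabs : |z| = z := abs_of_nonneg hz0
  have hsplit := (hsum z).sum_add_tsum_nat_add (f := fun n => u n z) 3
  have hhead : Real.Gamma a * (∑ i ∈ range 3, u i z)
      = 1 - 3*c*Real.Gamma a/Real.Gamma ((q:ℝ)+a) * z
        + 5*c^2*Real.Gamma a/Real.Gamma (2*(q:ℝ)+a)/2 * z^2 := by
    rw [Finset.sum_range_succ, Finset.sum_range_succ, Finset.sum_range_one]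
    simp only [hu]
    norm_num [Nat.factorial]
    rw [mul_comm ((q:ℝ)) 2]
    rw [show (2 * Real.Gamma (2*(q:ℝ)+a)) = Real.Gamma (2*(q:ℝ)+a) * 2 from mul_comm _ _,
      ← div_div]
    rw [mul_add, mul_add, mul_inv_cancel₀ hΓa]
    ring
  have hshift : Summable (fun n => |u (n+3) z|) := (summable_nat_add_iff 3).2 (habs_sum z)
  have hDsum : Summable (fun n : ℕ => z^3 * (3*C*((2*c)^(n+3)/(((n+3).factorial:ℝ))))) := by
    apply Summable.mul_left
    apply Summable.mul_left
    exact (summable_nat_add_iff 3).2 (Real.summable_pow_div_factorial (2*c))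
  have htail : |∑' n : ℕ, u (n+3) z|
      ≤ z^3 * (3*C*∑' n:ℕ, (2*c)^n/(n.factorial:ℝ)) := by
    have hb : ∀ n : ℕ, |u (n+3) z| ≤ z^3 * (3*C*((2*c)^(n+3)/(((n+3).factorial:ℝ)))) := by
      intro n
      have h1 := habs z (n+3)
      rw [hzabs] at h1
      have h2 : (2*c*z)^(n+3) = (2*c)^(n+3) * (z^n * z^3) := by
        rw [mul_pow, ← pow_add]
      have h3 : z^n ≤ 1 := pow_le_one₀ hz0 hz1
      have h4 : (0:ℝ) ≤ (2*c)^(n+3) := by positivity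
      have h5 : (0:ℝ) ≤ z^3 := by positivity
      have h6 : (0:ℝ) < (((n+3).factorial:ℝ)) := by positivity
      calc |u (n+3) z| ≤ 3*C*((2*c*z)^(n+3) / (((n+3).factorial:ℝ))) := h1
        _ = 3*C*((2*c)^(n+3) * z^n * z^3 / (((n+3).factorial:ℝ))) := by rw [h2]; ring
        _ ≤ 3*C*((2*c)^(n+3) * 1 * z^3 / (((n+3).factorial:ℝ))) := by
            gcongr
        _ = z^3 * (3*C*((2*c)^(n+3)/(((n+3).factorial:ℝ)))) := by ring
    calc |∑' n : ℕ, u (n+3) z| ≤ ∑' n : ℕ, |u (n+3) z| := by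
          have := norm_tsum_le_tsum_norm (f := fun n : ℕ => u (n+3) z)
            (by simpa [Real.norm_eq_abs] using hshift)
          simpa [Real.norm_eq_abs] using this
      _ ≤ ∑' n : ℕ, z^3 * (3*C*((2*c)^(n+3)/(((n+3).factorial:ℝ)))) :=
          Summable.tsum_le_tsum hb hshift hDsum
      _ = z^3 * (3*C* ∑' n:ℕ, (2*c)^(n+3)/(((n+3).factorial:ℝ))) := by
          rw [tsum_mul_left, tsum_mul_left]
      _ ≤ z^3 * (3*C*∑' n:ℕ, (2*c)^n/(n.factorial:ℝ)) := by
          have hfull := Summable.sum_add_tsum_nat_add (f := fun n:ℕ => (2*c)^n/(n.factorial:ℝ)) 3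
            (Real.summable_pow_div_factorial (2*c))
          have hpos : (0:ℝ) ≤ ∑ i ∈ range 3, (2*c)^i/(i.factorial:ℝ) :=
            Finset.sum_nonneg fun i _ => by positivity
          have : (∑' n:ℕ, (2*c)^(n+3)/(((n+3).factorial:ℝ)))
              ≤ ∑' n:ℕ, (2*c)^n/(n.factorial:ℝ) := by
            push_cast at hfull ⊢
            linarith
          have h0 : (0:ℝ) ≤ z^3 * (3*C) := by positivity
          nlinarith [this, h0]
  have hphi : Real.Gamma a * (∑' n : ℕ, u n z)
      - (1 - 3*c*Real.Gamma a/Real.Gamma ((q:ℝ)+a) * z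
         + 5*c^2*Real.Gamma a/Real.Gamma (2*(q:ℝ)+a)/2 * z^2)
      = Real.Gamma a * ∑' n : ℕ, u (n+3) z := by
    rw [← hsplit, mul_add, hhead]
    ring
  rw [hphi, abs_mul]
  calc |Real.Gamma a| * |∑' n : ℕ, u (n+3) z|
      ≤ |Real.Gamma a| * (z^3 * (3*C*∑' n:ℕ, (2*c)^n/(n.factorial:ℝ))) :=
        mul_le_mul_of_nonneg_left htail (abs_nonneg _)
    _ = |Real.Gamma a| * (3*C*∑' n:ℕ, (2*c)^n/(n.factorial:ℝ)) * z^3 := by ring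
set_option maxHeartbeats 1000000 in
theorem stmt_11 (q : ℕ) (hq : 1 ≤ q) (δ b c p : ℝ) (hδ : 0 < δ) (hb : 0 < b)
    (hc : 0 < c) (hp : p + 1 > 0) (a : ℝ) (ha : a = p / δ + (b + 2) / 2)
    (φ : ℝ → ℝ)
    (hφ : ∀ z : ℝ, φ z =
      Real.Gamma a *
        ∑' n : ℕ, (-1) ^ n * c ^ n * (2 * n + 1) * z ^ n /
          ((n.factorial : ℝ) * Real.Gamma ((q : ℝ) * n + a)))
    (α : ℕ → ℝ) (hαpos : ∀ n, 0 < α n) (hαsum : Summable fun n => 1 / α n)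
    (hprod : ∀ z : ℝ, φ z = ∏' n : ℕ, (1 - z / α n)) :
    (∑' n : ℕ, 1 / α n) = 3 * c * Real.Gamma a / Real.Gamma ((q : ℝ) + a) ∧
    (∑' n : ℕ, (1 / α n) ^ 2) =
      9 * c ^ 2 * Real.Gamma a ^ 2 / Real.Gamma ((q : ℝ) + a) ^ 2 -
        5 * c ^ 2 * Real.Gamma a / Real.Gamma (2 * (q : ℝ) + a) := by
  have hφ0 : φ 0 = 1 := by
    rw [hprod 0]
    simp
  have hΓa : Real.Gamma a ≠ 0 := by
    intro h
    have h1 := hφ 0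
    rw [h, zero_mul, hφ0] at h1
    exact one_ne_zero h1
  obtain ⟨M, hM0, hM⟩ := series_est q hq c hc a hΓa
  set x : ℕ → ℝ := fun n => 1/α n with hxdef
  have hxpos : ∀ n, 0 < x n := fun n => one_div_pos.2 (hαpos n)
  have hxsum : Summable x := hαsum
  obtain ⟨X0, hX0⟩ : BddAbove (Set.range x) :=
    (hxsum.tendsto_atTop_zero).bddAbove_range
  set X := max X0 1 with hXdef
  have hXpos : (0:ℝ) < X := lt_of_lt_of_le one_pos (le_max_right _ _)
  have hxle : ∀ n, x n ≤ X := fun n =>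
    le_trans (hX0 (Set.mem_range_self n)) (le_max_left _ _)
  have hx2 : Summable (fun n => x n ^ 2) := by
    apply Summable.of_nonneg_of_le (fun n => sq_nonneg (x n)) _ (hxsum.mul_left X)
    intro n
    nlinarith [hxpos n, hxle n]
  have hx3 : Summable (fun n => x n ^ 3) := by
    apply Summable.of_nonneg_of_le (fun n => pow_nonneg (hxpos n).le 3) _
      (hx2.mul_left X)
    intro n
    nlinarith [hxpos n, hxle n, sq_nonneg (x n)]
  set S1 := ∑' n, x n with hS1def
  set S2 := ∑' n, x n^2 with hS2def
  set S3 := ∑' n, x n^3 with hS3def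
  set A1 := 3*c*Real.Gamma a/Real.Gamma ((q:ℝ)+a) with hA1def
  set A2 := 5*c^2*Real.Gamma a/Real.Gamma (2*(q:ℝ)+a)/2 with hA2def
  set E2 := (S1^2 - S2)/2 with hE2def
  set E3 := (S1^3 - 3*S1*S2 + 2*S3)/6 with hE3def
  set t0 := min (1/(2*X)) 1 with ht0def
  have ht0pos : 0 < t0 := lt_min (by positivity) one_pos
  have key : ∀ t : ℝ, 0 < t → t ≤ t0 →
      (1 - t*S1 ≤ φ t ∧ φ t ≤ 1 - t*S1 + t^2*E2 ∧
       1 - t*S1 + t^2*E2 - t^3*E3 ≤ φ t ∧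
       |φ t - (1 - A1*t + A2*t^2)| ≤ M*t^3) := by
    intro t ht htle
    have ht1 : t ≤ 1 := le_trans htle (min_le_right _ _)
    have htX : t ≤ 1/(2*X) := le_trans htle (min_le_left _ _)
    have hhalf : ∀ n, t * x n ≤ 1/2 := by
      intro n
      have h1 : t * x n ≤ t * X := mul_le_mul_of_nonneg_left (hxle n) ht.le
      have h2 : t * X ≤ (1/(2*X)) * X := mul_le_mul_of_nonneg_right htX hXpos.le
      have h3 : (1/(2*X)) * X = 1/2 := by field_simp
      linarith
    have hb := prod_bounds (fun n => t * x n) (fun n => mul_pos ht (hxpos n)) hhalf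
      (by simpa using hxsum.mul_left t)
      (by simpa [mul_pow] using hx2.mul_left (t^2))
      (by simpa [mul_pow] using hx3.mul_left (t^3))
    have e1 : ∑' n, t * x n = t * S1 := tsum_mul_left
    have e2 : (∑' n : ℕ, (t * x n)^2) = t^2 * S2 := by
      simp_rw [mul_pow]; exact tsum_mul_left
    have e3 : (∑' n : ℕ, (t * x n)^3) = t^3 * S3 := by
      simp_rw [mul_pow]; exact tsum_mul_left
    have hpt : (∏' n : ℕ, (1 - t * x n)) = φ t := by
      rw [hprod t]
      exact (tprod_congr fun n => by rw [mul_one_div]).symm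
    rw [e1, e2, e3, hpt] at hb
    obtain ⟨hb1, hb2, hb3⟩ := hb
    refine ⟨hb1, ?_, ?_, ?_⟩
    · calc φ t ≤ 1 - t*S1 + ((t*S1)^2 - t^2*S2)/2 := hb2
        _ = 1 - t*S1 + t^2*E2 := by rw [hE2def]; ring
    · calc 1 - t*S1 + t^2*E2 - t^3*E3
          = 1 - t*S1 + ((t*S1)^2 - t^2*S2)/2
            - ((t*S1)^3 - 3*(t*S1)*(t^2*S2) + 2*(t^3*S3))/6 := by
              rw [hE2def, hE3def]; ring
        _ ≤ φ t := hb3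
    · have := hM t ht.le ht1
      rw [← hφ t] at this
      exact this
  have hS1A1 : S1 = A1 := by
    have hle : S1 - A1 ≤ 0 := by
      apply le_zero_of_small _ (E2 - A2) M t0 ht0pos
      intro t ht htle
      obtain ⟨hb1, hb2, hb3, habs⟩ := key t ht htle
      have h := abs_le.1 habs
      have h2 : t*(S1 - A1) ≤ t*(t*(E2 - A2) + t^2*M) := by nlinarith [h.1, hb2]
      have := le_of_mul_le_mul_left h2 ht
      linarith [sq_nonneg t]
    have hge : A1 - S1 ≤ 0 := by
      apply le_zero_of_small _ A2 M t0 ht0pos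
      intro t ht htle
      obtain ⟨hb1, hb2, hb3, habs⟩ := key t ht htle
      have h := abs_le.1 habs
      have h2 : t*(A1 - S1) ≤ t*(t*A2 + t^2*M) := by nlinarith [h.2, hb1]
      exact le_of_mul_le_mul_left h2 ht
    linarith
  have hE2A2 : E2 = A2 := by
    have hle : E2 - A2 ≤ 0 := by
      apply le_zero_of_small _ (M + E3) 0 t0 ht0pos
      intro t ht htle
      obtain ⟨hb1, hb2, hb3, habs⟩ := key t ht htle
      have h := abs_le.1 habs
      rw [← hS1A1] at h
      have h2 : t*(t*(E2 - A2)) ≤ t*(t*(t*(M + E3))) := by nlinarith [h.2, hb3]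
      have h3 := le_of_mul_le_mul_left h2 ht
      have h4 := le_of_mul_le_mul_left h3 ht
      nlinarith [h4]
    have hge : A2 - E2 ≤ 0 := by
      apply le_zero_of_small _ M 0 t0 ht0pos
      intro t ht htle
      obtain ⟨hb1, hb2, hb3, habs⟩ := key t ht htle
      have h := abs_le.1 habs
      rw [← hS1A1] at h
      have h2 : t*(t*(A2 - E2)) ≤ t*(t*(t*M)) := by nlinarith [h.1, hb2]
      have h3 := le_of_mul_le_mul_left h2 ht
      have h4 := le_of_mul_le_mul_left h3 ht
      nlinarith [h4]
    linarith
  constructor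
  · exact hS1A1
  · have hS2eq : S2 = A1^2 - 2*A2 := by
      have h1 : (S1^2 - S2)/2 = A2 := by rw [← hE2def]; exact hE2A2
      rw [hS1A1] at h1
      linarith
    rw [hS2eq, hA1def, hA2def, div_pow]
    ring
end

section
/- Let (ςₙ) be positive reals with minimum ς₁, ∑ 1/ςₙ < ∞, κₖ = ∑ ςₙ^{-k}, and suppose κ₁ = 2cΓ(a)/Γ(q+a) and κ₂ = 4c²Γ(a)²/Γ(q+a)² - 3c²Γ(a)/Γ(2q+a) with a, c > 0, q ∈ ℕ, q ≥ 1, κ₂ > 0. Then 2Γ(q+a)/(cΓ(a)) < 4ς₁ < 8Γ(q+a)Γ(2q+a) / (c·(4Γ(a)Γ(2q+a) - 3Γ(q+a)²)), assuming the sequence has at least two distinct terms. -/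
/-!
Put `κₖ = ∑ ςₙ^{-k}`. Dropping all terms but two from `κ₁` gives `1/ς₁ < κ₁`, and bounding
`ςₙ^{-2} ≤ ς₁^{-1} ςₙ^{-1}` termwise (strictly at a term `ςₘ ≠ ς₁`) gives `κ₂ < κ₁/ς₁`.
Inserting the Gamma-function values of `κ₁` and `κ₂` turns `κ₁⁻¹ < ς₁ < κ₁/κ₂` into the claim.
-/

open Real

section BoundedNonneg

variable {ι : Type*} {x : ι → ℝ} {M : ℝ}

theorem sq_le_mul_of_le (hx : ∀ i, 0 ≤ x i) (hle : ∀ i, x i ≤ M) (i : ι) :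
    x i ^ 2 ≤ M * x i := by
  rw [sq]; exact mul_le_mul_of_nonneg_right (hle i) (hx i)

theorem Summable.sq_of_le (hsum : Summable x) (hx : ∀ i, 0 ≤ x i) (hle : ∀ i, x i ≤ M) :
    Summable fun i => x i ^ 2 :=
  Summable.of_nonneg_of_le (fun i => sq_nonneg (x i)) (sq_le_mul_of_le hx hle) (hsum.mul_left M)

theorem tsum_sq_lt_mul_tsum (hx : ∀ i, 0 ≤ x i) (hle : ∀ i, x i ≤ M) (hsum : Summable x)
    {j : ι} (hj : 0 < x j) (hjM : x j < M) :
    ∑' i, x i ^ 2 < M * ∑' i, x i := by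
  have hsq_lt : x j ^ 2 < M * x j := by
    rw [sq]; exact mul_lt_mul_of_pos_right hjM hj
  rw [← tsum_mul_left]
  exact Summable.tsum_lt_tsum (sq_le_mul_of_le hx hle) hsq_lt (hsum.sq_of_le hx hle)
    (hsum.mul_left M)

end BoundedNonneg

theorem euler_rayleigh_bounds {ι : Type*} {ς : ι → ℝ} {i₀ j : ι} (hpos : ∀ i, 0 < ς i)
    (hmin : ∀ i, ς i₀ ≤ ς i) (hsum : Summable fun i => 1 / ς i) (hj : ς j ≠ ς i₀) :
    (∑' i, 1 / ς i)⁻¹ < ς i₀ ∧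
      ς i₀ < (∑' i, 1 / ς i) / ∑' i, (1 / ς i) ^ 2 := by
  have hinv_pos : ∀ i, 0 < 1 / ς i := fun i => one_div_pos.mpr (hpos i)
  have hji₀ : j ≠ i₀ := fun h => hj (congrArg ς h)
  have hκ₁ : 1 / ς i₀ < ∑' i, 1 / ς i :=
    lt_hasSum hsum.hasSum i₀ (fun i _ => (hinv_pos i).le) j hji₀ (hinv_pos j)
  have hle : ∀ i, 1 / ς i ≤ 1 / ς i₀ := fun i => one_div_le_one_div_of_le (hpos i₀) (hmin i)
  have hκ₂ : ∑' i, (1 / ς i) ^ 2 < 1 / ς i₀ * ∑' i, 1 / ς i :=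
    tsum_sq_lt_mul_tsum (fun i => (hinv_pos i).le) hle hsum (hinv_pos j)
      (one_div_lt_one_div_of_lt (hpos i₀) (lt_of_le_of_ne (hmin j) hj.symm))
  have hκ₂_pos : 0 < ∑' i, (1 / ς i) ^ 2 :=
    (hsum.sq_of_le (fun i => (hinv_pos i).le) hle).tsum_pos (fun i => sq_nonneg _) j
      (pow_pos (hinv_pos j) 2)
  constructor
  · rw [inv_lt_comm₀ (hinv_pos i₀ |>.trans hκ₁) (hpos i₀), ← one_div]
    exact hκ₁
  · rw [lt_div_iff₀ hκ₂_pos]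
    calc ς i₀ * ∑' i, (1 / ς i) ^ 2 < ς i₀ * (1 / ς i₀ * ∑' i, 1 / ς i) :=
          mul_lt_mul_of_pos_left hκ₂ (hpos i₀)
      _ = ∑' i, 1 / ς i := by field_simp [(hpos i₀).ne']

theorem stmt_13_general (q : ℕ) (a c : ℝ) (ha : 0 < a) (hc : 0 < c)
    (ς : ℕ → ℝ) (hpos : ∀ n, 0 < ς n) (hmin : ∀ n, ς 0 ≤ ς n)
    (hsum : Summable fun n => 1 / ς n) (hdist : ∃ m, ς m ≠ ς 0)
    (hκ1 : (∑' n : ℕ, 1 / ς n) = 2 * c * Real.Gamma a / Real.Gamma ((q : ℝ) + a))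
    (hκ2 : (∑' n : ℕ, (1 / ς n) ^ 2) =
      4 * c ^ 2 * Real.Gamma a ^ 2 / Real.Gamma ((q : ℝ) + a) ^ 2 -
        3 * c ^ 2 * Real.Gamma a / Real.Gamma (2 * (q : ℝ) + a)) :
    2 * Real.Gamma ((q : ℝ) + a) / (c * Real.Gamma a) < 4 * ς 0 ∧
    4 * ς 0 <
      8 * Real.Gamma ((q : ℝ) + a) * Real.Gamma (2 * (q : ℝ) + a) /
        (c * (4 * Real.Gamma a * Real.Gamma (2 * (q : ℝ) + a) -
          3 * Real.Gamma ((q : ℝ) + a) ^ 2)) := by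
  obtain ⟨m, hm⟩ := hdist
  obtain ⟨hlower, hupper⟩ := euler_rayleigh_bounds hpos hmin hsum hm
  rw [hκ1] at hlower hupper
  rw [hκ2] at hupper
  have hG₀ : Gamma a ≠ 0 := (Gamma_pos_of_pos ha).ne'
  have hG₁ : Gamma (q + a) ≠ 0 := (Gamma_pos_of_pos (by positivity)).ne'
  have hG₂ : Gamma (2 * q + a) ≠ 0 := (Gamma_pos_of_pos (by positivity)).ne'
  constructor
  · calc 2 * Gamma (q + a) / (c * Gamma a) = 4 * (2 * c * Gamma a / Gamma (q + a))⁻¹ := by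
          field_simp; ring
      _ < 4 * ς 0 := by linarith
  · calc 4 * ς 0 < 4 * (2 * c * Gamma a / Gamma (q + a) /
            (4 * c ^ 2 * Gamma a ^ 2 / Gamma (q + a) ^ 2 -
              3 * c ^ 2 * Gamma a / Gamma (2 * q + a))) := by linarith
      -- an identity even when `4 Γ(a) Γ(2q+a) = 3 Γ(q+a)²`, both sides then being `x / 0 = 0`
      _ = _ := by field_simp; ring

theorem stmt_13 (q : ℕ) (hq : 1 ≤ q) (a c : ℝ) (ha : 0 < a) (hc : 0 < c)
    (ς : ℕ → ℝ) (hpos : ∀ n, 0 < ς n) (hmin : ∀ n, ς 0 ≤ ς n)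
    (hsum : Summable fun n => 1 / ς n) (hdist : ∃ m, ς m ≠ ς 0)
    (hκ1 : (∑' n : ℕ, 1 / ς n) = 2 * c * Real.Gamma a / Real.Gamma ((q : ℝ) + a))
    (hκ2 : (∑' n : ℕ, (1 / ς n) ^ 2) =
      4 * c ^ 2 * Real.Gamma a ^ 2 / Real.Gamma ((q : ℝ) + a) ^ 2 -
        3 * c ^ 2 * Real.Gamma a / Real.Gamma (2 * (q : ℝ) + a))
    (hκ2pos : 0 < ∑' n : ℕ, (1 / ς n) ^ 2) :
    2 * Real.Gamma ((q : ℝ) + a) / (c * Real.Gamma a) < 4 * ς 0 ∧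
    4 * ς 0 <
      8 * Real.Gamma ((q : ℝ) + a) * Real.Gamma (2 * (q : ℝ) + a) /
        (c * (4 * Real.Gamma a * Real.Gamma (2 * (q : ℝ) + a) -
          3 * Real.Gamma ((q : ℝ) + a) ^ 2)) :=
  stmt_13_general q a c ha hc ς hpos hmin hsum hdist hκ1 hκ2
end

section
/- Let a, c > 0 and q a positive integer, and define Λ(z) = Γ(a)·∑_{n≥0} (-1)ⁿcⁿ(2n+1)² zⁿ/(n! Γ(qn+a)). If Λ(z) = ∏_{n≥1}(1 - z/ϱₙ) with positive zeros ϱₙ and ∑1/ϱₙ < ∞, then the Euler–Rayleigh sums satisfy μ₁ = 9cΓ(a)/Γ(q+a) and μ₂ = 81c²Γ(a)²/Γ(q+a)² - 25c²Γ(a)/Γ(2q+a). -/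
/-!
Expand `Λ` to second order at `0` in two ways. Its power series `∑ gₙ zⁿ` gives
`Λ z = 1 + g₁ z + g₂ z² + O(z³)` because `|gₙ|` is dominated by a multiple of `(9|c|)ⁿ / n!`.
For the canonical product, the elementary inequalities
`1 - S + (S² - T)/2 - S³/6 ≤ ∏ (1 - xᵢ) ≤ 1 - S + (S² - T)/2` (with `S = ∑ xᵢ`, `T = ∑ xᵢ²`,
`0 ≤ xᵢ ≤ 1`), applied to `xₙ = z / ϱₙ`, give `Λ z = 1 - μ₁ z + (μ₁² - μ₂)/2 z² + O(z³)` for small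
`z > 0`. Comparing coefficients, `μ₁ = -g₁` and `μ₂ = μ₁² - 2 g₂`.
-/

open Finset Filter Topology Asymptotics

theorem Real.min_one_mul_Gamma_le_Gamma_add_nat {x : ℝ} (hx : 0 < x) (m : ℕ) :
    min 1 x * Real.Gamma x ≤ Real.Gamma (x + m) := by
  have hΓ : 0 < Real.Gamma x := Real.Gamma_pos_of_pos hx
  induction m with
  | zero => simpa using mul_le_of_le_one_left hΓ.le (min_le_left 1 x)
  | succ m ih =>
    have hxm : 0 < x + m := by positivity
    rw [Nat.cast_succ, ← add_assoc, Real.Gamma_add_one hxm.ne']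
    rcases Nat.eq_zero_or_pos m with rfl | hm
    · simpa using mul_le_mul_of_nonneg_right (min_le_right 1 x) hΓ.le
    · have h1 : (1 : ℝ) ≤ x + m := by
        have : (1 : ℝ) ≤ m := by exact_mod_cast hm
        linarith
      calc min 1 x * Real.Gamma x ≤ Real.Gamma (x + m) := ih
        _ ≤ (x + m) * Real.Gamma (x + m) :=
          le_mul_of_one_le_left (Real.Gamma_pos_of_pos hxm).le h1

theorem sq_two_mul_add_one_le_nine_pow (n : ℕ) : (2 * (n : ℝ) + 1) ^ 2 ≤ 9 ^ n := by
  induction n with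
  | zero => norm_num
  | succ n ih =>
    push_cast
    nlinarith [pow_succ (9 : ℝ) n, (Nat.cast_nonneg n : (0 : ℝ) ≤ n)]

section

variable {ι : Type*} (s : Finset ι) (x : ι → ℝ)

theorem prod_one_sub_le (hx0 : ∀ i ∈ s, 0 ≤ x i) (hx1 : ∀ i ∈ s, x i ≤ 1) :
    ∏ i ∈ s, (1 - x i) ≤
      1 - ∑ i ∈ s, x i + ((∑ i ∈ s, x i) ^ 2 - ∑ i ∈ s, x i ^ 2) / 2 := by
  induction s using Finset.cons_induction with
  | empty => simp
  | cons j s hj ih =>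
    simp only [Finset.mem_cons, forall_eq_or_imp] at hx0 hx1
    rw [prod_cons, sum_cons, sum_cons]
    have hS := Finset.sum_sq_le_sq_sum_of_nonneg hx0.2
    have := mul_le_mul_of_nonneg_left (ih hx0.2 hx1.2) (sub_nonneg.2 hx1.1)
    nlinarith [mul_nonneg hx0.1 (sub_nonneg.2 hS)]

theorem le_prod_one_sub (hx0 : ∀ i ∈ s, 0 ≤ x i) (hx1 : ∀ i ∈ s, x i ≤ 1) :
    1 - ∑ i ∈ s, x i + ((∑ i ∈ s, x i) ^ 2 - ∑ i ∈ s, x i ^ 2) / 2 - (∑ i ∈ s, x i) ^ 3 / 6 ≤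
      ∏ i ∈ s, (1 - x i) := by
  induction s using Finset.cons_induction with
  | empty => simp
  | cons j s hj ih =>
    simp only [Finset.mem_cons, forall_eq_or_imp] at hx0 hx1
    rw [prod_cons, sum_cons, sum_cons]
    have hS : 0 ≤ ∑ i ∈ s, x i := sum_nonneg hx0.2
    have hT : 0 ≤ ∑ i ∈ s, x i ^ 2 := sum_nonneg fun i _ => sq_nonneg (x i)
    have := mul_le_mul_of_nonneg_left (ih hx0.2 hx1.2) (sub_nonneg.2 hx1.1)
    nlinarith [mul_nonneg hx0.1 hT, mul_nonneg hS (sq_nonneg (x j)),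
      mul_nonneg hx0.1 (pow_nonneg hS 3), pow_nonneg hx0.1 3]

theorem abs_prod_one_sub_sub_le (hx0 : ∀ i ∈ s, 0 ≤ x i) (hx1 : ∀ i ∈ s, x i ≤ 1) :
    |∏ i ∈ s, (1 - x i) - (1 - ∑ i ∈ s, x i + ((∑ i ∈ s, x i) ^ 2 - ∑ i ∈ s, x i ^ 2) / 2)| ≤
      (∑ i ∈ s, x i) ^ 3 / 6 := by
  have hlower := le_prod_one_sub s x hx0 hx1
  have hupper := prod_one_sub_le s x hx0 hx1
  have hcube : 0 ≤ (∑ i ∈ s, x i) ^ 3 := pow_nonneg (sum_nonneg hx0) 3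
  rw [abs_le]
  constructor <;> linarith

end

theorem abs_tprod_one_sub_sub_le {x : ℕ → ℝ} (hx0 : ∀ n, 0 ≤ x n) (hx1 : ∀ n, x n ≤ 1)
    (hx : Summable x) :
    |∏' n, (1 - x n) - (1 - ∑' n, x n + ((∑' n, x n) ^ 2 - ∑' n, x n ^ 2) / 2)| ≤
      (∑' n, x n) ^ 3 / 6 := by
  have hmul : Multipliable fun n => 1 - x n := by
    simpa only [← sub_eq_add_neg] using
      multipliable_one_add_of_summable (f := fun n => -x n) (by simpa using hx.abs)
  have hsq : Summable fun n => x n ^ 2 :=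
    hx.of_nonneg_of_le (fun n => sq_nonneg _) fun n => by nlinarith [hx0 n, hx1 n]
  have hS := hx.hasSum.tendsto_sum_nat
  have hE := ((tendsto_const_nhds (x := (1 : ℝ))).sub hS).add
    (((hS.pow 2).sub hsq.hasSum.tendsto_sum_nat).div_const 2)
  exact le_of_tendsto_of_tendsto' ((hmul.hasProd.tendsto_prod_nat.sub hE).abs)
    ((hS.pow 3).div_const 6)
    fun n => abs_prod_one_sub_sub_le _ x (fun i _ => hx0 i) fun i _ => hx1 i

theorem isBigO_tprod_one_sub_mul {r : ℕ → ℝ} (hr0 : ∀ n, 0 ≤ r n) (hr : Summable r) :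
    (fun z => ∏' n, (1 - z * r n) -
        (1 - (∑' n, r n) * z + ((∑' n, r n) ^ 2 - ∑' n, r n ^ 2) / 2 * z ^ 2)) =O[𝓝[>] 0]
      fun z => z ^ 3 := by
  set s := ∑' n, r n
  have hsmall : ∀ᶠ z in 𝓝[>] (0 : ℝ), z * s ≤ 1 :=
    (tendsto_nhdsWithin_of_tendsto_nhds
      ((continuous_id.mul continuous_const).tendsto' 0 0 (zero_mul s))).eventually_le_const
      one_pos
  refine IsBigO.of_bound (s ^ 3 / 6) ?_
  filter_upwards [hsmall, self_mem_nhdsWithin] with z hzs (hz : 0 < z)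
  have hx0 : ∀ n, 0 ≤ z * r n := fun n => mul_nonneg hz.le (hr0 n)
  have hx1 : ∀ n, z * r n ≤ 1 := fun n =>
    (mul_le_mul_of_nonneg_left (hr.le_tsum n fun j _ => hr0 j) hz.le).trans hzs
  have h := abs_tprod_one_sub_sub_le hx0 hx1 (hr.mul_left z)
  simp only [mul_pow, tsum_mul_left] at h
  rw [Real.norm_eq_abs, Real.norm_eq_abs, abs_of_pos (pow_pos hz 3)]
  convert h using 2 <;> ring

theorem abs_tsum_mul_pow_sub_sum_range_le {g : ℕ → ℝ} (hg : Summable fun n => |g n|) (k : ℕ)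
    {z : ℝ} (hz : |z| ≤ 1) :
    |∑' n, g n * z ^ n - ∑ i ∈ range k, g i * z ^ i| ≤ (∑' n, |g (n + k)|) * |z| ^ k := by
  have hbound : ∀ n, |g n * z ^ n| ≤ |g n| := fun n => by
    rw [abs_mul, abs_pow]
    exact mul_le_of_le_one_right (abs_nonneg _) (pow_le_one₀ (abs_nonneg z) hz)
  have hsum : Summable fun n => g n * z ^ n :=
    .of_norm_bounded hg fun n => hbound n
  have htail : ∀ n, |g (n + k) * z ^ (n + k)| ≤ |g (n + k)| * |z| ^ k := fun n => by
    rw [abs_mul, abs_pow, pow_add]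
    exact mul_le_mul_of_nonneg_left
      (mul_le_of_le_one_left (by positivity) (pow_le_one₀ (abs_nonneg z) hz)) (abs_nonneg _)
  have hsumk := ((summable_nat_add_iff k).2 hsum).norm
  have hgk : Summable fun n => |g (n + k)| := (summable_nat_add_iff k).2 hg
  rw [← hsum.sum_add_tsum_nat_add k, add_sub_cancel_left, ← tsum_mul_right]
  exact (norm_tsum_le_tsum_norm hsumk).trans (hsumk.tsum_le_tsum htail (hgk.mul_right _))

theorem isBigO_tsum_mul_pow_sub_sum_range {g : ℕ → ℝ} (hg : Summable fun n => |g n|) (k : ℕ) :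
    (fun z => ∑' n, g n * z ^ n - ∑ i ∈ range k, g i * z ^ i) =O[𝓝 0] fun z => z ^ k := by
  refine IsBigO.of_bound (∑' n, |g (n + k)|) ?_
  filter_upwards [Metric.closedBall_mem_nhds (0 : ℝ) one_pos] with z hz
  rw [Real.norm_eq_abs, Real.norm_eq_abs, abs_pow]
  exact abs_tsum_mul_pow_sub_sum_range_le hg k (by simpa using hz)

theorem eq_zero_of_mul_pow_isBigO_pow_succ {a : ℝ} {k : ℕ}
    (h : (fun z : ℝ => a * z ^ k) =O[𝓝[>] 0] fun z => z ^ (k + 1)) : a = 0 := by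
  obtain ⟨C, hC⟩ := h.bound
  have hconst : (fun _ : ℝ => a) =O[𝓝[>] 0] fun z => z := by
    refine IsBigO.of_bound C ?_
    filter_upwards [hC, self_mem_nhdsWithin] with z hz (hz0 : 0 < z)
    rw [norm_mul, norm_pow, norm_pow, pow_succ, mul_comm ‖a‖, mul_left_comm] at hz
    exact le_of_mul_le_mul_left hz (pow_pos (norm_pos_iff.2 hz0.ne') k)
  exact tendsto_nhds_unique tendsto_const_nhds
    (hconst.trans_tendsto (tendsto_nhdsWithin_of_tendsto_nhds tendsto_id))

theorem eq_zero_of_linear_add_quadratic_isBigO_cube {α β : ℝ}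
    (h : (fun z : ℝ => α * z + β * z ^ 2) =O[𝓝[>] 0] fun z => z ^ 3) : α = 0 ∧ β = 0 := by
  have hcube : (fun z : ℝ => z ^ 3) =O[𝓝[>] 0] fun z => z ^ 2 :=
    ((isLittleO_pow_pow (by norm_num)).isBigO).mono nhdsWithin_le_nhds
  have hα : α = 0 := by
    refine eq_zero_of_mul_pow_isBigO_pow_succ (k := 1) ?_
    exact ((h.trans hcube).sub ((isBigO_refl (fun z : ℝ => z ^ 2) _).const_mul_left β)).congr_left
      fun z => by ring
  subst hα
  exact ⟨rfl, eq_zero_of_mul_pow_isBigO_pow_succ (h.congr_left fun z => by ring)⟩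

/-- The `n`-th Taylor coefficient of `Λ` at `0`. -/
noncomputable def lambdaCoeff (q : ℕ) (a c : ℝ) (n : ℕ) : ℝ :=
  Real.Gamma a * ((-1) ^ n * c ^ n * (2 * n + 1) ^ 2 /
    ((n.factorial : ℝ) * Real.Gamma ((q : ℝ) * n + a)))

section lambdaCoeff

variable (q : ℕ) {a : ℝ} (c : ℝ)

theorem lambdaCoeff_zero (ha : 0 < a) : lambdaCoeff q a c 0 = 1 := by
  simp [lambdaCoeff, (Real.Gamma_pos_of_pos ha).ne']

theorem lambdaCoeff_one : lambdaCoeff q a c 1 = -(9 * c * Real.Gamma a / Real.Gamma (q + a)) := by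
  norm_num [lambdaCoeff]
  ring

theorem lambdaCoeff_two :
    lambdaCoeff q a c 2 = 25 * c ^ 2 * Real.Gamma a / Real.Gamma (2 * q + a) / 2 := by
  norm_num [lambdaCoeff]
  rw [mul_comm (q : ℝ) 2]
  ring

theorem abs_lambdaCoeff_le (ha : 0 < a) (n : ℕ) :
    |lambdaCoeff q a c n| ≤ (9 * |c|) ^ n / n.factorial / min 1 a := by
  have hΓa : 0 < Real.Gamma a := Real.Gamma_pos_of_pos ha
  have hΓ : min 1 a * Real.Gamma a ≤ Real.Gamma ((q : ℝ) * n + a) := by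
    simpa [add_comm] using Real.min_one_mul_Gamma_le_Gamma_add_nat ha (q * n)
  have hΓn : 0 < Real.Gamma ((q : ℝ) * n + a) := Real.Gamma_pos_of_pos (by positivity)
  rw [lambdaCoeff, abs_mul, abs_div, abs_of_pos hΓa, abs_mul, abs_mul, abs_mul, abs_pow, abs_pow,
    abs_neg, abs_one, one_pow, one_mul, abs_of_nonneg (by positivity : (0 : ℝ) ≤ (2 * n + 1) ^ 2),
    Nat.abs_cast, abs_of_pos hΓn]
  calc Real.Gamma a * (|c| ^ n * (2 * n + 1) ^ 2 /
        (n.factorial * Real.Gamma ((q : ℝ) * n + a)))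
      ≤ Real.Gamma a * (|c| ^ n * 9 ^ n / (n.factorial * (min 1 a * Real.Gamma a))) := by
        gcongr
        exact sq_two_mul_add_one_le_nine_pow n
    _ = (9 * |c|) ^ n / n.factorial / min 1 a := by
        rw [mul_pow]
        field_simp

theorem summable_abs_lambdaCoeff (ha : 0 < a) : Summable fun n => |lambdaCoeff q a c n| :=
  ((Real.summable_pow_div_factorial (9 * |c|)).div_const (min 1 a)).of_nonneg_of_le
    (fun _ => abs_nonneg _) (abs_lambdaCoeff_le q c ha)

end lambdaCoeff

theorem stmt_17_general (q : ℕ) (a c : ℝ) (ha : 0 < a)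
    (Λ : ℝ → ℝ)
    (hΛ : ∀ z : ℝ, Λ z =
      Real.Gamma a *
        ∑' n : ℕ, (-1) ^ n * c ^ n * (2 * n + 1) ^ 2 * z ^ n /
          ((n.factorial : ℝ) * Real.Gamma ((q : ℝ) * n + a)))
    (ϱ : ℕ → ℝ) (hpos : ∀ n, 0 < ϱ n) (hsum : Summable fun n => 1 / ϱ n)
    (hprod : ∀ z : ℝ, Λ z = ∏' n : ℕ, (1 - z / ϱ n)) :
    (∑' n : ℕ, 1 / ϱ n) = 9 * c * Real.Gamma a / Real.Gamma ((q : ℝ) + a) ∧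
    (∑' n : ℕ, (1 / ϱ n) ^ 2) =
      81 * c ^ 2 * Real.Gamma a ^ 2 / Real.Gamma ((q : ℝ) + a) ^ 2 -
        25 * c ^ 2 * Real.Gamma a / Real.Gamma (2 * (q : ℝ) + a) := by
  set g := lambdaCoeff q a c
  have hseries : (fun z => Λ z - (1 + g 1 * z + g 2 * z ^ 2)) =O[𝓝[>] 0] fun z => z ^ 3 := by
    refine ((isBigO_tsum_mul_pow_sub_sum_range (summable_abs_lambdaCoeff q c ha) 3).mono
      nhdsWithin_le_nhds).congr_left fun z => ?_
    rw [hΛ z, ← tsum_mul_left]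
    simp only [sum_range_succ, sum_range_zero, g, lambdaCoeff_zero q c ha]
    congr 1
    · exact tsum_congr fun n => by rw [lambdaCoeff]; ring
    · ring
  have hproduct := isBigO_tprod_one_sub_mul (fun n => (one_div_pos.2 (hpos n)).le) hsum
  simp only [mul_one_div, ← hprod] at hproduct
  set μ₁ := ∑' n, 1 / ϱ n
  set μ₂ := ∑' n, (1 / ϱ n) ^ 2
  obtain ⟨h1, h2⟩ := eq_zero_of_linear_add_quadratic_isBigO_cube (α := g 1 + μ₁)
    (β := g 2 - (μ₁ ^ 2 - μ₂) / 2) ((hproduct.sub hseries).congr_left fun z => by ring)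
  rw [show g 1 = _ from lambdaCoeff_one q c] at h1
  rw [show g 2 = _ from lambdaCoeff_two q c] at h2
  have hμ₁ : μ₁ = 9 * c * Real.Gamma a / Real.Gamma (q + a) := by linarith
  have hμ₂ : μ₂ = μ₁ ^ 2 - 25 * c ^ 2 * Real.Gamma a / Real.Gamma (2 * q + a) := by linarith
  exact ⟨hμ₁, by rw [hμ₂, hμ₁, div_pow]; ring⟩

theorem stmt_17 (q : ℕ) (hq : 1 ≤ q) (a c : ℝ) (ha : 0 < a) (hc : 0 < c)
    (Λ : ℝ → ℝ)
    (hΛ : ∀ z : ℝ, Λ z =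
      Real.Gamma a *
        ∑' n : ℕ, (-1) ^ n * c ^ n * (2 * n + 1) ^ 2 * z ^ n /
          ((n.factorial : ℝ) * Real.Gamma ((q : ℝ) * n + a)))
    (ϱ : ℕ → ℝ) (hpos : ∀ n, 0 < ϱ n) (hsum : Summable fun n => 1 / ϱ n)
    (hprod : ∀ z : ℝ, Λ z = ∏' n : ℕ, (1 - z / ϱ n)) :
    (∑' n : ℕ, 1 / ϱ n) = 9 * c * Real.Gamma a / Real.Gamma ((q : ℝ) + a) ∧
    (∑' n : ℕ, (1 / ϱ n) ^ 2) =
      81 * c ^ 2 * Real.Gamma a ^ 2 / Real.Gamma ((q : ℝ) + a) ^ 2 -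
        25 * c ^ 2 * Real.Gamma a / Real.Gamma (2 * (q : ℝ) + a) :=
  stmt_17_general q a c ha Λ hΛ ϱ hpos hsum hprod
end
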